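/- For all φ, ψ ∈ L²(μ): (i) ∫_X φ · (Q((LP)φ)) dμ = ‖(LP)φ‖²_{L²(μ)} ≥ 0, and (ii) ∫_X (Q((LP)φ)) · ψ dμ = ∫_X φ · (Q((LP)ψ)) dμ; that is, the composition Q∘LP is a nonnegative self-adjoint operator on L²(μ). -/

import Mathlib

/-!
`(LP)ψ` is the step function equal to the mean `ψ̄ₘ = μ(Eₘ)⁻¹ ∫_{Eₘ} ψ` on `Ẽₘ`, and `Q` turns
it into the step function equal to `μ(Eₘ)⁻¹ μ(Ẽₘ) ψ̄ₘ` on `Eₘ`, since the `Ẽₘ` are disjoint.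
Pairing with `φ` therefore gives the symmetric form `⟨φ, Q(LP)ψ⟩ = ∑ₘ μ(Ẽₘ) φ̄ₘ ψ̄ₘ`,
which for `φ = ψ` is `∑ₘ μ(Ẽₘ) φ̄ₘ² = ‖(LP)φ‖²`.
-/

open MeasureTheory Function

section StepFunction

variable {X ι : Type*} [Fintype ι] {s : ι → Set X}

lemma sum_indicator_const_apply_of_mem {β : Type*} [AddCommMonoid β]
    (hs : Pairwise (Disjoint on s)) (c : ι → β) {i : ι} {x : X} (hx : x ∈ s i) :
    ∑ k, (s k).indicator (fun _ => c k) x = c i := by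
  rw [Finset.sum_eq_single i (fun k _ hk => ?_) (fun h => absurd (Finset.mem_univ i) h)]
  · exact Set.indicator_of_mem hx _
  · exact Set.indicator_of_notMem (fun hxk => Set.disjoint_left.1 (hs hk) hxk hx) _

lemma comp_sum_indicator_const {β γ : Type*} [AddCommMonoid β] [AddCommMonoid γ]
    (hs : Pairwise (Disjoint on s)) (g : β → γ) (hg : g 0 = 0) (c : ι → β) (x : X) :
    g (∑ k, (s k).indicator (fun _ => c k) x) = ∑ k, (s k).indicator (fun _ => g (c k)) x := by
  by_cases hx : ∃ i, x ∈ s i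
  · obtain ⟨i, hi⟩ := hx
    rw [sum_indicator_const_apply_of_mem hs _ hi, sum_indicator_const_apply_of_mem hs _ hi]
  · simp [Set.indicator_of_notMem (not_exists.mp hx _), hg]

variable [MeasurableSpace X] {μ : Measure X}

lemma setIntegral_sum_indicator_const (hs : Pairwise (Disjoint on s)) {i : ι}
    (hsi : MeasurableSet (s i)) (c : ι → ℝ) :
    ∫ y in s i, ∑ k, (s k).indicator (fun _ => c k) y ∂μ = μ.real (s i) * c i := by
  rw [setIntegral_congr_fun hsi fun y hy => sum_indicator_const_apply_of_mem hs c hy,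
    setIntegral_const, smul_eq_mul]

lemma integral_sum_indicator_const (hs : ∀ i, MeasurableSet (s i)) (hfin : ∀ i, μ (s i) ≠ ⊤)
    (c : ι → ℝ) :
    ∫ x, ∑ k, (s k).indicator (fun _ => c k) x ∂μ = ∑ k, μ.real (s k) * c k := by
  rw [integral_finsetSum _ fun k _ => (integrableOn_const (hfin k)).integrable_indicator (hs k)]
  simp only [integral_indicator_const _ (hs _), smul_eq_mul]

lemma integral_mul_sum_indicator_const (hs : ∀ i, MeasurableSet (s i)) {f : X → ℝ}
    (hf : ∀ i, IntegrableOn f (s i) μ) (c : ι → ℝ) :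
    ∫ x, f x * ∑ k, (s k).indicator (fun _ => c k) x ∂μ = ∑ k, c k * ∫ x in s k, f x ∂μ := by
  have hmul : ∀ x, f x * ∑ k, (s k).indicator (fun _ => c k) x
      = ∑ k, (s k).indicator (fun y => f y * c k) x := fun x => by
    simp only [Finset.mul_sum, Set.indicator_mul_right]
  simp only [hmul]
  rw [integral_finsetSum _ fun k _ => IntegrableOn.integrable_indicator ((hf k).mul_const _) (hs k)]
  simp only [integral_indicator (hs _), integral_mul_const, mul_comm]

end StepFunction

lemma MeasureTheory.MemLp.integrableOn_of_measure_ne_top {X F : Type*} [MeasurableSpace X]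
    [NormedAddCommGroup F] {μ : Measure X} {f : X → F} {p : ENNReal} (hf : MemLp f p μ)
    (hp : 1 ≤ p) {s : Set X} (hs : μ s ≠ ⊤) : IntegrableOn f s μ :=
  have : Fact (μ s < ⊤) := ⟨hs.lt_top⟩
  (hf.restrict s).integrable hp

namespace Electrode

variable {X ι : Type*} [MeasurableSpace X] [Fintype ι] (μ : Measure X) (E Et : ι → Set X)

noncomputable def mean (f : X → ℝ) (k : ι) : ℝ := (μ (E k)).toReal⁻¹ * ∫ z in E k, f z ∂μ

/-- The paper's `LP`; `proj` below is its `Q`. -/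
noncomputable def extProj (f : X → ℝ) (x : X) : ℝ := ∑ k, (Et k).indicator (fun _ => mean μ E f k) x

noncomputable def proj (f : X → ℝ) (x : X) : ℝ :=
  ∑ m, (E m).indicator (fun _ => (μ (E m)).toReal⁻¹ * ∫ y in Et m, f y ∂μ) x

variable {μ E Et}

lemma integral_mul_proj_extProj (hE : ∀ m, MeasurableSet (E m)) (hEt : ∀ m, MeasurableSet (Et m))
    (hEtdisj : Pairwise (Disjoint on Et)) {φ : X → ℝ} (hφ : ∀ m, IntegrableOn φ (E m) μ)
    (ψ : X → ℝ) :
    ∫ x, φ x * proj μ E Et (extProj μ E Et ψ) x ∂μ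
      = ∑ m, μ.real (Et m) * mean μ E φ m * mean μ E ψ m := by
  simp only [proj, extProj, setIntegral_sum_indicator_const hEtdisj (hEt _)]
  rw [integral_mul_sum_indicator_const hE hφ]
  refine Finset.sum_congr rfl fun m _ => ?_
  simp only [mean]
  ring

lemma integral_extProj_sq (hEt : ∀ m, MeasurableSet (Et m)) (hEtdisj : Pairwise (Disjoint on Et))
    (hEtfin : ∀ m, μ (Et m) ≠ ⊤) (f : X → ℝ) :
    ∫ x, extProj μ E Et f x ^ 2 ∂μ = ∑ m, μ.real (Et m) * mean μ E f m * mean μ E f m := by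
  have hsq : ∀ x, extProj μ E Et f x ^ 2 = ∑ k, (Et k).indicator (fun _ => mean μ E f k ^ 2) x :=
    comp_sum_indicator_const hEtdisj (· ^ 2) (zero_pow two_ne_zero) _
  simp only [hsq]
  rw [integral_sum_indicator_const hEt hEtfin]
  simp only [sq, mul_assoc]

lemma integral_mul_proj_extProj_self (hE : ∀ m, MeasurableSet (E m))
    (hEt : ∀ m, MeasurableSet (Et m)) (hEtdisj : Pairwise (Disjoint on Et))
    (hEtfin : ∀ m, μ (Et m) ≠ ⊤) {φ : X → ℝ} (hφ : ∀ m, IntegrableOn φ (E m) μ) :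
    ∫ x, φ x * proj μ E Et (extProj μ E Et φ) x ∂μ = ∫ x, extProj μ E Et φ x ^ 2 ∂μ := by
  rw [integral_mul_proj_extProj hE hEt hEtdisj hφ, integral_extProj_sq hEt hEtdisj hEtfin]

lemma integral_proj_extProj_mul (hE : ∀ m, MeasurableSet (E m))
    (hEt : ∀ m, MeasurableSet (Et m)) (hEtdisj : Pairwise (Disjoint on Et)) {φ ψ : X → ℝ}
    (hφ : ∀ m, IntegrableOn φ (E m) μ) (hψ : ∀ m, IntegrableOn ψ (E m) μ) :
    ∫ x, proj μ E Et (extProj μ E Et φ) x * ψ x ∂μ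
      = ∫ x, φ x * proj μ E Et (extProj μ E Et ψ) x ∂μ := by
  simp only [mul_comm _ (ψ _)]
  rw [integral_mul_proj_extProj hE hEt hEtdisj hψ, integral_mul_proj_extProj hE hEt hEtdisj hφ]
  simp only [mul_right_comm]

end Electrode

theorem QLP_nonneg_selfadjoint_general
    {X : Type*} [MeasurableSpace X] (μ : Measure X)
    (M : ℕ) (E Et : Fin M → Set X)
    (hEmeas : ∀ m, MeasurableSet (E m))
    (hEtmeas : ∀ m, MeasurableSet (Et m))
    (hEtdisj : Pairwise fun i j => Disjoint (Et i) (Et j))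
    (hEfin : ∀ m, μ (E m) < ⊤)
    (hEtfin : ∀ m, μ (Et m) < ⊤) :
    (∀ φ : X → ℝ, MemLp φ 2 μ →
      (∫ x, φ x * (∑ m : Fin M, Set.indicator (E m)
          (fun _ => (μ (E m)).toReal⁻¹ * ∫ y in Et m,
            (∑ k : Fin M, Set.indicator (Et k)
              (fun _ => (μ (E k)).toReal⁻¹ * ∫ z in E k, φ z ∂μ) y) ∂μ) x) ∂μ
        =
       ∫ x, (∑ k : Fin M, Set.indicator (Et k)
          (fun _ => (μ (E k)).toReal⁻¹ * ∫ z in E k, φ z ∂μ) x) ^ 2 ∂μ) ∧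
      0 ≤ ∫ x, φ x * (∑ m : Fin M, Set.indicator (E m)
          (fun _ => (μ (E m)).toReal⁻¹ * ∫ y in Et m,
            (∑ k : Fin M, Set.indicator (Et k)
              (fun _ => (μ (E k)).toReal⁻¹ * ∫ z in E k, φ z ∂μ) y) ∂μ) x) ∂μ) ∧
    (∀ φ ψ : X → ℝ, MemLp φ 2 μ → MemLp ψ 2 μ →
      ∫ x, (∑ m : Fin M, Set.indicator (E m)
          (fun _ => (μ (E m)).toReal⁻¹ * ∫ y in Et m,
            (∑ k : Fin M, Set.indicator (Et k)
              (fun _ => (μ (E k)).toReal⁻¹ * ∫ z in E k, φ z ∂μ) y) ∂μ) x) * ψ x ∂μ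
        =
      ∫ x, φ x * (∑ m : Fin M, Set.indicator (E m)
          (fun _ => (μ (E m)).toReal⁻¹ * ∫ y in Et m,
            (∑ k : Fin M, Set.indicator (Et k)
              (fun _ => (μ (E k)).toReal⁻¹ * ∫ z in E k, ψ z ∂μ) y) ∂μ) x) ∂μ) := by
  have hint : ∀ f : X → ℝ, MemLp f 2 μ → ∀ m, IntegrableOn f (E m) μ := fun f hf m =>
    hf.integrableOn_of_measure_ne_top one_le_two (hEfin m).ne
  have hEtfin' : ∀ m, μ (Et m) ≠ ⊤ := fun m => (hEtfin m).ne
  refine ⟨fun φ hφ => ?_, fun φ ψ hφ hψ =>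
    Electrode.integral_proj_extProj_mul hEmeas hEtmeas hEtdisj (hint φ hφ) (hint ψ hψ)⟩
  have h := Electrode.integral_mul_proj_extProj_self hEmeas hEtmeas hEtdisj hEtfin' (hint φ hφ)
  exact ⟨h, h ▸ integral_nonneg fun _ => sq_nonneg _⟩

/-- The composition `Q ∘ LP` is a nonnegative self-adjoint operator
on `L²(μ)`: (i) `∫ φ · Q((LP)φ) dμ = ‖(LP)φ‖²_{L²} ≥ 0` and (ii)
`∫ Q((LP)φ) · ψ dμ = ∫ φ · Q((LP)ψ) dμ` for all `φ, ψ ∈ L²(μ)`. -/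
theorem QLP_nonneg_selfadjoint
    {X : Type*} [MeasurableSpace X] (μ : Measure X)
    (M : ℕ) (hM : 1 ≤ M) (E Et : Fin M → Set X)
    (hEmeas : ∀ m, MeasurableSet (E m))
    (hEtmeas : ∀ m, MeasurableSet (Et m))
    (hEdisj : Pairwise fun i j => Disjoint (E i) (E j))
    (hEtdisj : Pairwise fun i j => Disjoint (Et i) (Et j))
    (hEpos : ∀ m, 0 < μ (E m)) (hEfin : ∀ m, μ (E m) < ⊤)
    (hsub : ∀ m, E m ⊆ Et m) (hEtfin : ∀ m, μ (Et m) < ⊤) :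
    (∀ φ : X → ℝ, MemLp φ 2 μ →
      (∫ x, φ x * (∑ m : Fin M, Set.indicator (E m)
          (fun _ => (μ (E m)).toReal⁻¹ * ∫ y in Et m,
            (∑ k : Fin M, Set.indicator (Et k)
              (fun _ => (μ (E k)).toReal⁻¹ * ∫ z in E k, φ z ∂μ) y) ∂μ) x) ∂μ
        =
       ∫ x, (∑ k : Fin M, Set.indicator (Et k)
          (fun _ => (μ (E k)).toReal⁻¹ * ∫ z in E k, φ z ∂μ) x) ^ 2 ∂μ) ∧
      0 ≤ ∫ x, φ x * (∑ m : Fin M, Set.indicator (E m)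
          (fun _ => (μ (E m)).toReal⁻¹ * ∫ y in Et m,
            (∑ k : Fin M, Set.indicator (Et k)
              (fun _ => (μ (E k)).toReal⁻¹ * ∫ z in E k, φ z ∂μ) y) ∂μ) x) ∂μ) ∧
    (∀ φ ψ : X → ℝ, MemLp φ 2 μ → MemLp ψ 2 μ →
      ∫ x, (∑ m : Fin M, Set.indicator (E m)
          (fun _ => (μ (E m)).toReal⁻¹ * ∫ y in Et m,
            (∑ k : Fin M, Set.indicator (Et k)
              (fun _ => (μ (E k)).toReal⁻¹ * ∫ z in E k, φ z ∂μ) y) ∂μ) x) * ψ x ∂μ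
        =
      ∫ x, φ x * (∑ m : Fin M, Set.indicator (E m)
          (fun _ => (μ (E m)).toReal⁻¹ * ∫ y in Et m,
            (∑ k : Fin M, Set.indicator (Et k)
              (fun _ => (μ (E k)).toReal⁻¹ * ∫ z in E k, ψ z ∂μ) y) ∂μ) x) ∂μ) :=
  QLP_nonneg_selfadjoint_general μ M E Et hEmeas hEtmeas hEtdisj hEfin hEtfin
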